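/- arXiv:0901.1010 — 2 statements merged into one kernel-verified Lean document; each statement's English description precedes it below -/
import Mathlib

section
/- Let r ≥ 3, s ≥ 3 and t be integers such that T(r,s,t) admits a proper 3-coloring. Then every proper 4-coloring f of T(r,s,t) satisfies deg(f) ≡ 0 (mod 6). -/
/-- The subgroup Λ of ℤ² generated by (r,0) and (−t,s). -/
def torusLattice (r s t : ℤ) : AddSubgroup (ℤ × ℤ) :=
  AddSubgroup.closure {(r, 0), (-t, s)}

/-- The vertex set ℤ²/Λ of the triangulation T(r,s,t). -/
abbrev TorusV (r s t : ℤ) := (ℤ × ℤ) ⧸ torusLattice r s t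

/-- The quotient map ℤ² → ℤ²/Λ. -/
def tmk (r s t : ℤ) : (ℤ × ℤ) →+ TorusV r s t := QuotientAddGroup.mk' (torusLattice r s t)

/-- The six neighbour displacement vectors. -/
def hexDirs : Finset (ℤ × ℤ) := {(1,0), (-1,0), (0,1), (0,-1), (1,1), (-1,-1)}

/-- The triangulation T(r,s,t) of the torus: two distinct vertices are adjacent
iff their difference is the image of one of the six displacement vectors. -/
def TriT (r s t : ℤ) : SimpleGraph (TorusV r s t) where
  Adj u v := u ≠ v ∧ ∃ d ∈ hexDirs, v - u = tmk r s t d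
  symm := ⟨by
    rintro u v ⟨hne, d, hd, hsub⟩
    refine ⟨hne.symm, -d, ?_, ?_⟩
    · fin_cases hd <;> decide
    · rw [show u - v = -(v - u) from (neg_sub v u).symm, hsub, ← map_neg]⟩
  loopless := ⟨fun u h => h.1 rfl⟩

/-- A proper `q`-coloring of a simple graph. -/
def IsProperColoring {V : Type*} (G : SimpleGraph V) {q : ℕ} (f : V → Fin q) : Prop :=
  ∀ ⦃u v : V⦄, G.Adj u v → f u ≠ f v

/-- The sign contribution of a face whose ordered vertex colors are `(a,b,c)`:
`+1` for the cyclic orientations of `(0,1,2)`, `-1` for those of `(0,2,1)`,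
`0` otherwise. -/
def faceSign (a b c : Fin 4) : ℤ :=
  if (a, b, c) = ((0 : Fin 4), (1 : Fin 4), (2 : Fin 4)) ∨ (a, b, c) = (1, 2, 0)
      ∨ (a, b, c) = (2, 0, 1) then 1
  else if (a, b, c) = ((0 : Fin 4), (2 : Fin 4), (1 : Fin 4)) ∨ (a, b, c) = (2, 1, 0)
      ∨ (a, b, c) = (1, 0, 2) then -1
  else 0

/-- The degree of a 4-coloring of T(r,s,t): the sum over all triangular faces
(each face counted exactly once, via the canonical vertex representatives in
the box [0,r)×[0,s)) of the signed contributions of the up-face and the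
down-face based at each vertex. -/
def degT (r s t : ℤ) (f : TorusV r s t → Fin 4) : ℤ :=
  ∑ i ∈ Finset.range r.toNat, ∑ j ∈ Finset.range s.toNat,
    (faceSign (f (tmk r s t ((i : ℤ), (j : ℤ))))
              (f (tmk r s t ((i : ℤ) + 1, (j : ℤ) + 1)))
              (f (tmk r s t ((i : ℤ), (j : ℤ) + 1)))
      + faceSign (f (tmk r s t ((i : ℤ), (j : ℤ))))
                 (f (tmk r s t ((i : ℤ) + 1, (j : ℤ))))
                 (f (tmk r s t ((i : ℤ) + 1, (j : ℤ) + 1))))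

/-!
Colour each vertex by the pair `(c v, f v)` of a proper 3-colouring `c` and the 4-colouring `f`.
On every face the values of `c` are distinct, so they run forward or backward in the cyclic order
of `Fin 3`. Modulo 2 and modulo 3 there is a weight on forward edges (from 3-colour `k` to `k + 1`)
summing to the face sign around every forward face; extended antisymmetrically, it exhibits the face
sign as a coboundary. In the up- and down-face of a cell the diagonal edge cancels, and the remaining
horizontal and vertical edges telescope to zero over the torus. Hence `2 ∣ deg f` and `3 ∣ deg f`.
-/

lemma faceSign_swap (a b d : Fin 4) : faceSign a d b = -faceSign a b d := by
  revert a b d; decide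

lemma Fin.three_cyclic_or_anticyclic {k l m : Fin 3} (hkl : k ≠ l) (hlm : l ≠ m) (hkm : k ≠ m) :
    l = k + 1 ∧ m = k + 2 ∨ l = k + 2 ∧ m = k + 1 := by
  revert k l m; decide

section edgeWeight

variable {n : ℕ}

def edgeWeight (w : Fin 3 → Fin 4 → Fin 4 → ZMod n) (x y : Fin 3 × Fin 4) : ZMod n :=
  if y.1 = x.1 + 1 then w x.1 x.2 y.2 else if x.1 = y.1 + 1 then -w y.1 y.2 x.2 else 0

lemma edgeWeight_swap (w : Fin 3 → Fin 4 → Fin 4 → ZMod n) (x y : Fin 3 × Fin 4) :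
    edgeWeight w y x = -edgeWeight w x y := by
  obtain ⟨k, a⟩ := x
  obtain ⟨l, b⟩ := y
  fin_cases k <;> fin_cases l <;> simp [edgeWeight]

def IsFaceSignPotential (w : Fin 3 → Fin 4 → Fin 4 → ZMod n) : Prop :=
  ∀ (k : Fin 3) (a b d : Fin 4), a ≠ b → b ≠ d → a ≠ d →
    (faceSign a b d : ZMod n) = w k a b + w (k + 1) b d + w (k + 2) d a

variable {w : Fin 3 → Fin 4 → Fin 4 → ZMod n}

lemma faceSign_eq_edgeWeight_cycle (hw : IsFaceSignPotential w) {x y z : Fin 3 × Fin 4}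
    (hxy : x.1 ≠ y.1) (hyz : y.1 ≠ z.1) (hxz : x.1 ≠ z.1)
    (hxy' : x.2 ≠ y.2) (hyz' : y.2 ≠ z.2) (hxz' : x.2 ≠ z.2) :
    (faceSign x.2 y.2 z.2 : ZMod n) = edgeWeight w x y + edgeWeight w y z + edgeWeight w z x := by
  have forward : ∀ {x y z : Fin 3 × Fin 4}, x.2 ≠ y.2 → y.2 ≠ z.2 → x.2 ≠ z.2 →
      y.1 = x.1 + 1 → z.1 = x.1 + 2 →
      (faceSign x.2 y.2 z.2 : ZMod n) = edgeWeight w x y + edgeWeight w y z + edgeWeight w z x := by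
    rintro ⟨k, a⟩ ⟨l, b⟩ ⟨m, d⟩ hab hbd had (rfl : l = k + 1) (rfl : m = k + 2)
    have hk : k = k + 2 + 1 := by fin_cases k <;> rfl
    rw [hw k a b d hab hbd had]
    simp [edgeWeight, add_assoc, ← hk]
  rcases Fin.three_cyclic_or_anticyclic hxy hyz hxz with ⟨hy, hz⟩ | ⟨hy, hz⟩
  · exact forward hxy' hyz' hxz' hy hz
  · have h := forward (y := z) (z := y) hxz' hyz'.symm hxy' hz hy
    rw [faceSign_swap, edgeWeight_swap w z x, edgeWeight_swap w y z, edgeWeight_swap w x y] at h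
    push_cast at h
    linear_combination -h

-- The diagonal edge from `v` to `v + e₁ + e₂` is crossed in opposite directions by the two faces.
lemma faceSign_up_add_faceSign_down {V : Type*} [AddCommGroup V] {G : SimpleGraph V}
    (hw : IsFaceSignPotential w) {g : V → Fin 3 × Fin 4}
    (hg : ∀ ⦃u u'⦄, G.Adj u u' → (g u).1 ≠ (g u').1 ∧ (g u).2 ≠ (g u').2) {e₁ e₂ : V}
    (h₁ : ∀ v, G.Adj v (v + e₁)) (h₂ : ∀ v, G.Adj v (v + e₂)) (h₁₂ : ∀ v, G.Adj v (v + e₁ + e₂))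
    (v : V) :
    (faceSign (g v).2 (g (v + e₁ + e₂)).2 (g (v + e₂)).2
      + faceSign (g v).2 (g (v + e₁)).2 (g (v + e₁ + e₂)).2 : ZMod n)
      = edgeWeight w (g v) (g (v + e₁)) - edgeWeight w (g (v + e₂)) (g (v + e₂ + e₁))
        + edgeWeight w (g (v + e₁)) (g (v + e₁ + e₂)) - edgeWeight w (g v) (g (v + e₂)) := by
  have h₂₁ : G.Adj (v + e₂) (v + e₁ + e₂) := by simpa only [add_right_comm] using h₁ (v + e₂)
  have up := faceSign_eq_edgeWeight_cycle hw (hg (h₁₂ v)).1 (hg h₂₁).1.symm (hg (h₂ v)).1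
    (hg (h₁₂ v)).2 (hg h₂₁).2.symm (hg (h₂ v)).2
  have down := faceSign_eq_edgeWeight_cycle hw (hg (h₁ v)).1 (hg (h₂ (v + e₁))).1 (hg (h₁₂ v)).1
    (hg (h₁ v)).2 (hg (h₂ (v + e₁))).2 (hg (h₁₂ v)).2
  rw [up, down, edgeWeight_swap w (g (v + e₂)), edgeWeight_swap w (g v) (g (v + e₂)),
    edgeWeight_swap w (g v) (g (v + e₁ + e₂)), add_right_comm v e₂ e₁]
  abel

end edgeWeight

-- Modulo 2 the face sign is the parity of the number of vertices not coloured 3.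
def parityWeight (_ : Fin 3) (a _ : Fin 4) : ZMod 2 :=
  if a = 3 then 0 else 1

lemma isFaceSignPotential_parityWeight : IsFaceSignPotential parityWeight := by
  unfold IsFaceSignPotential parityWeight; decide

-- Modulo 3 a face on which `f` reads `a, b, d` at the 3-colours `0, 1, 2`, all different from 3,
-- has sign `b - a`; if `d = 3` the other two terms cancel that edge.
def mod3Weight (k : Fin 3) (a b : Fin 4) : ZMod 3 :=
  match k with
  | 0 => if a = 3 ∨ b = 3 then 0 else (b : ℕ) - (a : ℕ)
  | 1 => if b = 3 then -(a : ℕ) else 0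
  | 2 => if a = 3 then (b : ℕ) else 0

lemma isFaceSignPotential_mod3Weight : IsFaceSignPotential mod3Weight := by
  unfold IsFaceSignPotential mod3Weight; decide

section sums

variable {M : Type*} [AddCommGroup M]

lemma Finset.sum_range_comp_succ (g : ℕ → M) (n : ℕ) :
    ∑ i ∈ Finset.range n, g (i + 1) = ∑ i ∈ Finset.range n, g i + (g n - g 0) := by
  rw [← Finset.sum_range_sub, ← Finset.sum_add_distrib]
  simp only [add_sub_cancel]

lemma Function.Periodic.sum_range_comp_add {g : ℤ → M} {n : ℕ} (hg : Function.Periodic g n)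
    (k : ℤ) : ∑ i ∈ Finset.range n, g (i + k) = ∑ i ∈ Finset.range n, g i := by
  have step : ∀ k : ℤ, ∑ i ∈ Finset.range n, g (i + (k + 1)) = ∑ i ∈ Finset.range n, g (i + k) := by
    intro k
    have h := Finset.sum_range_comp_succ (fun i : ℕ => g (i + k)) n
    simp only [Nat.cast_add, Nat.cast_one, Nat.cast_zero, zero_add, add_comm (n : ℤ) k, hg k,
      sub_self, add_zero] at h
    simpa only [add_assoc, add_comm (1 : ℤ) k] using h
  induction k using Int.induction_on with
  | zero => simp
  | succ k ih => rw [step, ih]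
  | pred k ih => rw [← ih, ← step, sub_add_cancel]

end sums

section torus

variable {r s t : ℤ}

lemma mem_torusLattice_iff {p : ℤ × ℤ} :
    p ∈ torusLattice r s t ↔ ∃ m n : ℤ, (m * r - n * t, n * s) = p := by
  simp [torusLattice, AddSubgroup.mem_closure_pair, sub_eq_add_neg]

lemma tmk_eq_zero_iff {p : ℤ × ℤ} : tmk r s t p = 0 ↔ p ∈ torusLattice r s t :=
  QuotientAddGroup.eq_zero_iff p

lemma dvd_snd_of_mem_torusLattice {p : ℤ × ℤ} (hp : p ∈ torusLattice r s t) : s ∣ p.2 := by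
  obtain ⟨m, n, rfl⟩ := mem_torusLattice_iff.1 hp
  exact dvd_mul_left s n

lemma dvd_of_mk_zero_mem_torusLattice (hs : s ≠ 0) {a : ℤ} (ha : (a, 0) ∈ torusLattice r s t) :
    r ∣ a := by
  obtain ⟨m, n, hmn⟩ := mem_torusLattice_iff.1 ha
  obtain ⟨rfl, hn⟩ := Prod.mk.inj hmn
  obtain rfl : n = 0 := (mul_eq_zero.1 hn).resolve_right hs
  simp

lemma tmk_ne_zero_of_mem_hexDirs (hr : 2 ≤ r) (hs : 2 ≤ s) {d : ℤ × ℤ} (hd : d ∈ hexDirs) :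
    tmk r s t d ≠ 0 := by
  have hr1 : ¬r ∣ 1 := fun h => by have := Int.le_of_dvd one_pos h; omega
  have hs1 : ¬s ∣ 1 := fun h => by have := Int.le_of_dvd one_pos h; omega
  rw [Ne, tmk_eq_zero_iff]
  intro h
  simp only [hexDirs, Finset.mem_insert, Finset.mem_singleton] at hd
  rcases hd with rfl | rfl | rfl | rfl | rfl | rfl
  · exact hr1 (dvd_of_mk_zero_mem_torusLattice (by omega) h)
  · exact hr1 (by simpa using dvd_of_mk_zero_mem_torusLattice (by omega) h)
  all_goals exact hs1 (by simpa using dvd_snd_of_mem_torusLattice h)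

lemma triT_adj_add (hr : 2 ≤ r) (hs : 2 ≤ s) (v : TorusV r s t) {d : ℤ × ℤ} (hd : d ∈ hexDirs) :
    (TriT r s t).Adj v (v + tmk r s t d) :=
  ⟨by simpa using tmk_ne_zero_of_mem_hexDirs (t := t) hr hs hd, d, hd, add_sub_cancel_left v _⟩

lemma tmk_add_one_fst (x y : ℤ) : tmk r s t (x + 1, y) = tmk r s t (x, y) + tmk r s t (1, 0) := by
  rw [← map_add, Prod.mk_add_mk, add_zero]

lemma tmk_add_one_snd (x y : ℤ) : tmk r s t (x, y + 1) = tmk r s t (x, y) + tmk r s t (0, 1) := by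
  rw [← map_add, Prod.mk_add_mk, add_zero]

lemma tmk_add_period_fst (x y : ℤ) : tmk r s t (x + r, y) = tmk r s t (x, y) := by
  rw [← sub_eq_zero, ← map_sub, Prod.mk_sub_mk, add_sub_cancel_left, sub_self, tmk_eq_zero_iff,
    mem_torusLattice_iff]
  exact ⟨1, 0, by simp⟩

lemma tmk_period_snd (x : ℤ) : tmk r s t (x, s) = tmk r s t (x + t, 0) := by
  rw [← sub_eq_zero, ← map_sub, Prod.mk_sub_mk, sub_add_cancel_left, sub_zero, tmk_eq_zero_iff,
    mem_torusLattice_iff]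
  exact ⟨0, 1, by simp⟩

variable {M : Type*} [AddCommGroup M]

def boxSum (φ : TorusV r s t → M) : M :=
  ∑ i ∈ Finset.range r.toNat, ∑ j ∈ Finset.range s.toNat, φ (tmk r s t (i, j))

lemma boxSum_comp_add_tmk_one_zero (hr : 0 ≤ r) (φ : TorusV r s t → M) :
    boxSum (fun v => φ (v + tmk r s t (1, 0))) = boxSum φ := by
  have hR : (r.toNat : ℤ) = r := Int.toNat_of_nonneg hr
  unfold boxSum
  rw [Finset.sum_comm]
  conv_rhs => rw [Finset.sum_comm]
  refine Finset.sum_congr rfl fun j _ => ?_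
  have hper : Function.Periodic (fun x : ℤ => φ (tmk r s t (x, j))) r.toNat := fun x => by
    simp only [hR, tmk_add_period_fst]
  simpa only [← tmk_add_one_fst] using hper.sum_range_comp_add 1

lemma boxSum_comp_add_tmk_zero_one (hr : 0 ≤ r) (hs : 0 ≤ s) (φ : TorusV r s t → M) :
    boxSum (fun v => φ (v + tmk r s t (0, 1))) = boxSum φ := by
  have hR : (r.toNat : ℤ) = r := Int.toNat_of_nonneg hr
  have hS : (s.toNat : ℤ) = s := Int.toNat_of_nonneg hs
  have hper : Function.Periodic (fun x : ℤ => φ (tmk r s t (x, 0))) r.toNat := fun x => by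
    simp only [hR, tmk_add_period_fst]
  have column (i : ℕ) := Finset.sum_range_comp_succ (fun j : ℕ => φ (tmk r s t (i, j))) s.toNat
  simp only [Nat.cast_add, Nat.cast_one] at column
  unfold boxSum
  simp only [← tmk_add_one_snd]
  rw [Finset.sum_congr rfl fun i _ => column i, Finset.sum_add_distrib, Finset.sum_sub_distrib]
  simp only [hS, tmk_period_snd, Nat.cast_zero, hper.sum_range_comp_add t, sub_self, add_zero]

theorem intCast_degT_eq_zero (hr : 2 ≤ r) (hs : 2 ≤ s) {c : TorusV r s t → Fin 3}
    {f : TorusV r s t → Fin 4} (hc : IsProperColoring (TriT r s t) c)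
    (hf : IsProperColoring (TriT r s t) f) {n : ℕ} {w : Fin 3 → Fin 4 → Fin 4 → ZMod n}
    (hw : IsFaceSignPotential w) : (degT r s t f : ZMod n) = 0 := by
  have cell := faceSign_up_add_faceSign_down hw (g := fun v => (c v, f v))
    (fun _ _ h => ⟨hc h, hf h⟩)
    (fun v => triT_adj_add hr hs v (d := (1, 0)) (by decide))
    (fun v => triT_adj_add hr hs v (d := (0, 1)) (by decide))
    (fun v => by rw [add_assoc, ← map_add]; exact triT_adj_add hr hs v (d := (1, 1)) (by decide))
  dsimp only at cell
  let A v := edgeWeight w (c v, f v) (c (v + tmk r s t (1, 0)), f (v + tmk r s t (1, 0)))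
  let B v := edgeWeight w (c v, f v) (c (v + tmk r s t (0, 1)), f (v + tmk r s t (0, 1)))
  have hdeg : (degT r s t f : ZMod n) = boxSum A - boxSum (fun v => A (v + tmk r s t (0, 1)))
      + boxSum (fun v => B (v + tmk r s t (1, 0))) - boxSum B := by
    simp only [degT, boxSum, Int.cast_sum, Int.cast_add, tmk_add_one_fst, tmk_add_one_snd, cell]
    simp only [A, B, Finset.sum_add_distrib, Finset.sum_sub_distrib]
  rw [hdeg, boxSum_comp_add_tmk_one_zero (by omega),
    boxSum_comp_add_tmk_zero_one (by omega) (by omega)]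
  abel

end torus

/-- If T(r,s,t) admits a proper 3-coloring, then every proper 4-coloring `f`
of T(r,s,t) satisfies `deg(f) ≡ 0 (mod 6)`. -/
theorem deg_dvd_six (r s t : ℤ) (hr : 3 ≤ r) (hs : 3 ≤ s)
    (h3 : ∃ c : TorusV r s t → Fin 3, IsProperColoring (TriT r s t) c)
    (f : TorusV r s t → Fin 4) (hf : IsProperColoring (TriT r s t) f) :
    (6 : ℤ) ∣ degT r s t f := by
  obtain ⟨c, hc⟩ := h3
  have h2 : ((2 : ℕ) : ℤ) ∣ degT r s t f := (ZMod.intCast_zmod_eq_zero_iff_dvd _ 2).1 <|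
    intCast_degT_eq_zero (by omega) (by omega) hc hf isFaceSignPotential_parityWeight
  have h3 : ((3 : ℕ) : ℤ) ∣ degT r s t f := (ZMod.intCast_zmod_eq_zero_iff_dvd _ 3).1 <|
    intCast_degT_eq_zero (by omega) (by omega) hc hf isFaceSignPotential_mod3Weight
  omega
end

section
/- Any two proper 4-colorings of the triangulation T(3,3) are Kempe equivalent. -/
open Classical in
/-- A single Kempe change. -/
def KempeStep {V : Type*} (G : SimpleGraph V) {q : ℕ} (f g : V → Fin q) : Prop :=
  ∃ a b : Fin q, a ≠ b ∧
    ∃ C : (G.induce {v | f v = a ∨ f v = b}).ConnectedComponent,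
      ∀ v : V,
        g v = if h : f v = a ∨ f v = b then
                if (G.induce {v | f v = a ∨ f v = b}).connectedComponentMk ⟨v, h⟩ = C
                then Equiv.swap a b (f v) else f v
              else f v

/-- Kempe equivalence: a finite sequence of Kempe changes. -/
def KempeEquiv {V : Type*} (G : SimpleGraph V) {q : ℕ} (f g : V → Fin q) : Prop :=
  Relation.ReflTransGen (KempeStep G) f g

/-- The six neighbour displacement vectors of the triangular lattice. -/
def hexDirsM (r s : ℕ) : Set (ZMod r × ZMod s) :=
  {(1,0), (-1,0), (0,1), (0,-1), (1,1), (-1,-1)}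

/-- The triangulation `T(r,s)` of the torus. -/
def TriRS (r s : ℕ) : SimpleGraph (ZMod r × ZMod s) where
  Adj u v := u ≠ v ∧ v - u ∈ hexDirsM r s
  symm := by
    constructor
    rintro u v ⟨hne, hmem⟩
    refine ⟨hne.symm, ?_⟩
    rw [show u - v = -(v - u) from (neg_sub v u).symm]
    simp only [hexDirsM, Set.mem_insert_iff, Set.mem_singleton_iff] at hmem ⊢
    rcases hmem with h|h|h|h|h|h <;> rw [h] <;> simp [Prod.ext_iff]
  loopless := ⟨fun u h => h.1 rfl⟩

/-- The degree of a 4-coloring of `T(r,s)`. -/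
def degRS (r s : ℕ) (f : ZMod r × ZMod s → Fin 4) : ℤ :=
  ∑ i ∈ Finset.range r, ∑ j ∈ Finset.range s,
    (faceSign (f ((i : ZMod r), (j : ZMod s)))
              (f ((i : ZMod r) + 1, (j : ZMod s) + 1))
              (f ((i : ZMod r), (j : ZMod s) + 1))
      + faceSign (f ((i : ZMod r), (j : ZMod s)))
                 (f ((i : ZMod r) + 1, (j : ZMod s)))
                 (f ((i : ZMod r) + 1, (j : ZMod s) + 1)))

/-! Two vertices of `T(3,3)` are adjacent exactly when they lie on different diagonals
`x + y = k`, so `T(3,3)` is the complete tripartite graph `K_{3,3,3}`. In a complete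
multipartite graph every color class of a proper coloring lies inside one part, so a vertex
can be recolored with any color already used in its part by a Kempe change on that vertex
alone; this makes every part monochromatic. Two colorings with monochromatic parts differ by a
permutation of the colors, and exchanging two colors everywhere is a sequence of Kempe changes,
one for each component of the two-colored subgraph. -/

open Function SimpleGraph Equiv

section

variable {V : Type*} {G : SimpleGraph V} {q : ℕ}

theorem Equiv.swap_apply_eq_or_eq_iff {α : Type*} [DecidableEq α] {a b x : α} :
    (swap a b x = a ∨ swap a b x = b) ↔ (x = a ∨ x = b) := by
  rw [swap_apply_eq_iff, swap_apply_eq_iff, swap_apply_left, swap_apply_right, or_comm]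

-- `S` is arbitrary so that `C` may be a component for another coloring with the same
-- `{a, b}`-colored vertices.
open Classical in
theorem kempeStep_of_setOf_eq {f g : V → Fin q} {a b : Fin q} (hab : a ≠ b) {S : Set V}
    (hS : {v | f v = a ∨ f v = b} = S) (C : (G.induce S).ConnectedComponent)
    (hg : ∀ v (hv : v ∈ S), g v =
      if (G.induce S).connectedComponentMk ⟨v, hv⟩ = C then swap a b (f v) else f v)
    (hg' : ∀ v ∉ S, g v = f v) :
    KempeStep G f g := by
  subst hS
  refine ⟨a, b, hab, C, fun v => ?_⟩
  by_cases hv : f v = a ∨ f v = b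
  · rw [dif_pos hv, hg v hv]
  · rw [dif_neg hv, hg' v hv]

theorem KempeStep.symm {f g : V → Fin q} (h : KempeStep G f g) : KempeStep G g f := by
  obtain ⟨a, b, hab, C, hC⟩ := h
  refine kempeStep_of_setOf_eq hab ?_ C (fun v hv => ?_) fun v hv => ?_
  · ext v
    have hv := hC v
    split_ifs at hv <;> simp_all [swap_apply_eq_or_eq_iff]
  · rw [hC v, dif_pos (show f v = a ∨ f v = b from hv)]
    split_ifs <;> simp
  · rw [hC v, dif_neg (show ¬(f v = a ∨ f v = b) from hv)]

instance : Std.Symm (KempeStep G (q := q)) := ⟨fun _ _ => KempeStep.symm⟩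

theorem KempeEquiv.symm {f g : V → Fin q} (h : KempeEquiv G f g) : KempeEquiv G g f :=
  symm_of (Relation.ReflTransGen (KempeStep G)) h

open Classical in
noncomputable def swapOnComponents (f : V → Fin q) (a b : Fin q)
    (𝒞 : Set (G.induce {v | f v = a ∨ f v = b}).ConnectedComponent) : V → Fin q :=
  fun v => if h : f v = a ∨ f v = b then
    if (G.induce {v | f v = a ∨ f v = b}).connectedComponentMk ⟨v, h⟩ ∈ 𝒞 then swap a b (f v)
    else f v
  else f v

open Classical in
theorem swapOnComponents_apply_of_mem {f : V → Fin q} {a b : Fin q}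
    {𝒞 : Set (G.induce {v | f v = a ∨ f v = b}).ConnectedComponent} {v : V}
    (hv : f v = a ∨ f v = b) :
    swapOnComponents f a b 𝒞 v =
      if (G.induce {v | f v = a ∨ f v = b}).connectedComponentMk ⟨v, hv⟩ ∈ 𝒞 then swap a b (f v)
      else f v :=
  dif_pos hv

theorem swapOnComponents_apply_of_not_mem {f : V → Fin q} {a b : Fin q}
    {𝒞 : Set (G.induce {v | f v = a ∨ f v = b}).ConnectedComponent} {v : V}
    (hv : ¬(f v = a ∨ f v = b)) :
    swapOnComponents f a b 𝒞 v = f v :=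
  dif_neg hv

@[simp]
theorem swapOnComponents_empty (f : V → Fin q) (a b : Fin q) :
    swapOnComponents (G := G) f a b ∅ = f := by
  funext v
  simp [swapOnComponents]

theorem kempeStep_swapOnComponents_insert {f : V → Fin q} {a b : Fin q} (hab : a ≠ b)
    {𝒞 : Set (G.induce {v | f v = a ∨ f v = b}).ConnectedComponent} {C} (hC : C ∉ 𝒞) :
    KempeStep G (swapOnComponents f a b 𝒞) (swapOnComponents f a b (insert C 𝒞)) := by
  refine kempeStep_of_setOf_eq hab ?_ C (fun v hv => ?_) fun v hv => ?_
  · ext v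
    simp only [swapOnComponents, Set.mem_ofPred_eq]
    split_ifs <;> simp_all [swap_apply_eq_or_eq_iff]
  · rw [swapOnComponents_apply_of_mem hv, swapOnComponents_apply_of_mem hv]
    split_ifs <;> simp_all
  · rw [swapOnComponents_apply_of_not_mem hv, swapOnComponents_apply_of_not_mem hv]

theorem kempeEquiv_swap_comp [Finite V] (f : V → Fin q) (a b : Fin q) :
    KempeEquiv G f (swap a b ∘ f) := by
  rcases eq_or_ne a b with rfl | hab
  · rw [swap_self, coe_refl, id_comp]
    exact Relation.ReflTransGen.refl
  have swap_finite : ∀ 𝒞 : Set (G.induce {v | f v = a ∨ f v = b}).ConnectedComponent,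
      KempeEquiv G f (swapOnComponents f a b 𝒞) := fun 𝒞 => by
    induction 𝒞, 𝒞.toFinite using Set.Finite.induction_on with
    | empty => rw [swapOnComponents_empty]; exact Relation.ReflTransGen.refl
    | insert hC _ ih => exact ih.tail (kempeStep_swapOnComponents_insert hab hC)
  convert swap_finite Set.univ using 1
  funext v
  by_cases hv : f v = a ∨ f v = b
  · simp [swapOnComponents_apply_of_mem hv]
  · rw [swapOnComponents_apply_of_not_mem hv]
    simp only [not_or] at hv
    exact swap_apply_of_ne_of_ne hv.1 hv.2

theorem kempeEquiv_perm_comp [Finite V] (f : V → Fin q) (π : Perm (Fin q)) :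
    KempeEquiv G f (π ∘ f) := by
  induction π using Perm.swap_induction_on with
  | one => exact Relation.ReflTransGen.refl
  | swap_mul π a b _ ih => exact ih.trans (kempeEquiv_swap_comp (π ∘ f) a b)

theorem kempeStep_update [DecidableEq V] {f : V → Fin q} (hf : IsProperColoring G f) {v : V}
    {c : Fin q} (hc : f v ≠ c) (hv : ∀ w, G.Adj v w → f w ≠ c) :
    KempeStep G f (update f v c) := by
  set S := {u | f u = f v ∨ f u = c}
  have isolated : ∀ u (hu : u ∈ S),
      (G.induce S).Reachable ⟨v, Or.inl rfl⟩ ⟨u, hu⟩ → u = v := by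
    rintro u hu ⟨p⟩
    cases p with
    | nil => rfl
    | cons hadj _ =>
      rcases (Subtype.prop _ : _ ∈ S) with h | h
      · exact absurd h.symm (hf hadj)
      · exact absurd h (hv _ hadj)
  refine kempeStep_of_setOf_eq hc rfl ((G.induce S).connectedComponentMk ⟨v, Or.inl rfl⟩)
    (fun u hu => ?_) fun u hu => ?_
  · by_cases huv : u = v
    · subst huv
      rw [update_self, if_pos rfl, swap_apply_left]
    · rw [update_of_ne huv, if_neg]
      exact fun h => huv (isolated u hu (ConnectedComponent.eq.1 h).symm)
  · refine update_of_ne ?_ _ _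
    rintro rfl
    exact hu (Or.inl rfl)

theorem kempeEquiv_update [DecidableEq V] {f : V → Fin q} (hf : IsProperColoring G f) {v : V}
    {c : Fin q} (hv : ∀ w, G.Adj v w → f w ≠ c) :
    KempeEquiv G f (update f v c) := by
  by_cases hc : f v = c
  · rw [← hc, update_eq_self]
    exact Relation.ReflTransGen.refl
  · exact Relation.ReflTransGen.single (kempeStep_update hf hc hv)

variable {ι : Type*} {p : V → ι}

theorem IsProperColoring.comp_of_forall_adj_iff (hG : ∀ u v, G.Adj u v ↔ p u ≠ p v)
    {f : V → Fin q} (hf : IsProperColoring G f) {φ : V → V} (hφ : ∀ v, p (φ v) = p v) :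
    IsProperColoring G (f ∘ φ) := fun u v huv =>
  hf ((hG _ _).2 (by rw [hφ, hφ]; exact (hG u v).1 huv))

theorem kempeEquiv_comp_of_forall_adj_iff [Finite V] (hG : ∀ u v, G.Adj u v ↔ p u ≠ p v)
    {f : V → Fin q} (hf : IsProperColoring G f) {φ : V → V} (hφ : ∀ v, p (φ v) = p v) :
    KempeEquiv G f (f ∘ φ) := by
  classical
  let φ_on (M : Set V) (v : V) : V := if v ∈ M then φ v else v
  have hφ_on : ∀ M v, p (φ_on M v) = p v := fun M v => by
    by_cases hv : v ∈ M <;> simp [φ_on, hv, hφ]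
  have moves : ∀ M : Set V, KempeEquiv G f (f ∘ φ_on M) := fun M => by
    induction M, M.toFinite using Set.Finite.induction_on with
    | empty =>
      simp only [φ_on, Set.mem_empty_iff_false, if_false]
      exact Relation.ReflTransGen.refl
    | @insert v M _ _ ih =>
      have hupdate : f ∘ φ_on (insert v M) = update (f ∘ φ_on M) v (f (φ v)) := by
        funext u
        by_cases huv : u = v <;> simp [φ_on, huv]
      rw [hupdate]
      refine ih.trans (kempeEquiv_update (hf.comp_of_forall_adj_iff hG (hφ_on M)) fun w hw => ?_)
      refine hf ((hG _ _).2 ?_)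
      rw [hφ_on, hφ]
      exact ((hG v w).1 hw).symm
  simpa [φ_on] using moves Set.univ

theorem kempeEquiv_of_forall_adj_iff [Finite V] (hp : Surjective p)
    (hG : ∀ u v, G.Adj u v ↔ p u ≠ p v) {f g : V → Fin q}
    (hf : IsProperColoring G f) (hg : IsProperColoring G g) :
    KempeEquiv G f g := by
  set r := surjInv hp
  have hr : ∀ v, p (r (p v)) = p v := fun v => surjInv_eq hp (p v)
  have injective_on_parts : ∀ {h : V → Fin q}, IsProperColoring G h → Injective (h ∘ r) :=
    fun hh i j hij => by
      by_contra hne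
      exact hh ((hG _ _).2 (by simpa [r, surjInv_eq hp] using hne)) hij
  have : Finite ι := Finite.of_injective _ (injective_on_parts hf)
  obtain ⟨π, hπ⟩ := Perm.exists_extending_pair _ _ (injective_on_parts hf) (injective_on_parts hg)
  have hπf : π ∘ (f ∘ r ∘ p) = g ∘ r ∘ p := funext fun v => hπ (p v)
  exact (kempeEquiv_comp_of_forall_adj_iff hG hf hr).trans <|
    (kempeEquiv_perm_comp _ π).trans <|
      hπf ▸ (kempeEquiv_comp_of_forall_adj_iff hG hg hr).symm

end

theorem triRS_three_three_adj_iff (u v : ZMod 3 × ZMod 3) :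
    (TriRS 3 3).Adj u v ↔ u.1 + u.2 ≠ v.1 + v.2 := by
  simp only [TriRS, hexDirsM, Set.mem_insert_iff, Set.mem_singleton_iff]
  revert u v
  decide

/-- Any two proper 4-colorings of the triangulation T(3,3) are Kempe
equivalent. -/
theorem T33_kempe (f g : ZMod 3 × ZMod 3 → Fin 4)
    (hf : IsProperColoring (TriRS 3 3) f) (hg : IsProperColoring (TriRS 3 3) g) :
    KempeEquiv (TriRS 3 3) f g :=
  kempeEquiv_of_forall_adj_iff (p := fun u => u.1 + u.2) (fun k => ⟨(0, k), zero_add k⟩)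
    triRS_three_three_adj_iff hf hg
end
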